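/- Let v : Ω⁰_ε → S¹ be a spin field and let ṽ : Ω_ε → S¹ be the field constructed as follows: on each lattice segment [i, j] with (i, j) ∈ Ω¹_ε, set θ̃(v)(i + s(j − i)) := θ(v)(i) + 2πs (β^e_{u(v)})_{i,j} for s ∈ [0,1], extend θ̃(v) inside each cell as a 0-homogeneous function with respect to the center of the cell, and define ṽ = e^{iθ̃(v)}. Then for each ε-square Q_i with i ∈ Ω²_ε, μ_v(Q_i) = (1/π) ∫_{∂Q_i} ṽ₁ (∂/∂s) ṽ₂ ds, i.e., the discrete vorticity of v in the cell Q_i equals (1/π) times the line integral of ṽ₁ dṽ₂ along the cell boundary; equivalently, the winding number of ṽ along ∂Q_i equals γ_v(i). -/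

import Mathlib

/-! On an edge, `ṽ₁ ∂ₛ ṽ₂ = cos² θ̃ · ∂ₛ θ̃`, so the edge integral from `a` to `b` is the integral
of `cos²` over `[θ(a), θ(a) + 2πβ]`, namely `πβ` plus the increment of `cos θ sin θ`. Since
`θ(a) + 2πβ ≡ θ(b) mod 2π`, these increments telescope around the cell, leaving `π` times the
discrete curl of `β`. -/

open MeasureTheory Filter

noncomputable section

/-- The position in `ℝ²` of the lattice point `i ∈ ℤ²` of the lattice `εℤ²`. -/
def pt (ε : ℝ) (i : ℤ × ℤ) : ℝ × ℝ := (ε * i.1, ε * i.2)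

/-- `i` is a point of the lattice `Ω⁰_ε = εℤ² ∩ Ω`. -/
def latticePt (ε : ℝ) (Ω : Set (ℝ × ℝ)) (i : ℤ × ℤ) : Prop := pt ε i ∈ Ω

/-- `(i, j)` is a nearest-neighbor bond in `Ω¹_ε`: both endpoints lie in `Ω` and
`j = i + e₁` or `j = i + e₂` (so that `|i − j| = ε` and `i ≤ j` componentwise). -/
def bond (ε : ℝ) (Ω : Set (ℝ × ℝ)) (i j : ℤ × ℤ) : Prop :=
  latticePt ε Ω i ∧ latticePt ε Ω j ∧ (j = i + (1, 0) ∨ j = i + (0, 1))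

/-- `i ∈ Ω²_ε`: the closed cell `i + [0, ε]²` is contained in `Ω`. -/
def cellIn (ε : ℝ) (Ω : Set (ℝ × ℝ)) (i : ℤ × ℤ) : Prop :=
  Set.Icc (pt ε i) (pt ε i + (ε, ε)) ⊆ Ω

/-- The center of the cell `i + [0, ε]²`. -/
def cellCenter (ε : ℝ) (i : ℤ × ℤ) : ℝ × ℝ := pt ε i + (ε / 2, ε / 2)

/-- The projection `P : ℝ → ℤ` onto the nearest integer (with the tie-breaking convention
making `t − P t ∈ (−1/2, 1/2]`). -/
def Pint (t : ℝ) : ℤ := ⌈t - 1 / 2⌉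

/-- The elastic part of the discrete strain of `u` on the (oriented) bond from `i` to `j`:
`β^e_u = 𝐝u − P(𝐝u) ∈ (−1/2, 1/2]`, where `𝐝u_{i,j} = u(j) − u(i)`. -/
def betaE (u : ℤ × ℤ → ℝ) (i j : ℤ × ℤ) : ℝ :=
  (u j - u i) - (Pint (u j - u i) : ℝ)

/-- The plastic part of the discrete strain: `β^p_u = P(𝐝u) ∈ ℤ`. -/
def betaP (u : ℤ × ℤ → ℝ) (i j : ℤ × ℤ) : ℝ := (Pint (u j - u i) : ℝ)

/-- The discrete curl of a bond function `ξ` around the cell with lower-left corner `i`: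
`𝐝ξ(i) = ξ_{i,i+e₂} + ξ_{i+e₂,i+e₁+e₂} − ξ_{i+e₁,i+e₁+e₂} − ξ_{i,i+e₁}`. -/
def dcurl (ξ : ℤ × ℤ → ℤ × ℤ → ℝ) (i : ℤ × ℤ) : ℝ :=
  ξ i (i + (0, 1)) + ξ (i + (0, 1)) (i + (1, 1)) - ξ (i + (1, 0)) (i + (1, 1)) -
    ξ i (i + (1, 0))

/-- The discrete dislocation function `α_u(i) = 𝐝β^e_u(i)`. -/
def alphaSD (u : ℤ × ℤ → ℝ) (i : ℤ × ℤ) : ℝ := dcurl (betaE u) i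

/-- The discrete screw-dislocation energy
`SD_ε(u) = ½ Σ_{(i,j) ∈ Ω¹_ε} dist²(u(i) − u(j), ℤ)`. -/
def SDen (ε : ℝ) (Ω : Set (ℝ × ℝ)) (u : ℤ × ℤ → ℝ) : ℝ :=
  (1 / 2) * ∑' b : {b : (ℤ × ℤ) × (ℤ × ℤ) // bond ε Ω b.1 b.2},
    (betaE u b.1.1 b.1.2) ^ 2

/-- The total variation `|μ_u|(Ω)` of the discrete dislocation measure
`μ_u = Σ_{i ∈ Ω²_ε} α_u(i) δ_{i+(ε/2,ε/2)}`. -/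
def SDtv (ε : ℝ) (Ω : Set (ℝ × ℝ)) (u : ℤ × ℤ → ℝ) : ℝ :=
  ∑' i : {i : ℤ × ℤ // cellIn ε Ω i}, |alphaSD u i|

/-- The phase `u(v) = θ(v)/2π ∈ [0, 1)` of a spin field `v` with values in `S¹ ⊆ ℂ`
(defined by `v = e^{2πi u(v)}`; any determination of the phase gives the same discrete
vorticity). -/
def phaseu (v : ℤ × ℤ → ℂ) (l : ℤ × ℤ) : ℝ :=
  if 0 ≤ (v l).arg then (v l).arg / (2 * Real.pi) else (v l).arg / (2 * Real.pi) + 1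

/-- The discrete vorticity `γ_v = α_{θ(v)/2π}` of a spin field `v`. -/
def gammaXY (v : ℤ × ℤ → ℂ) (i : ℤ × ℤ) : ℝ := alphaSD (phaseu v) i

/-- The `XY` energy `XY_ε(v) = ½ Σ_{(i,j) ∈ Ω¹_ε} |v(i) − v(j)|²`. -/
def XYen (ε : ℝ) (Ω : Set (ℝ × ℝ)) (v : ℤ × ℤ → ℂ) : ℝ :=
  (1 / 2) * ∑' b : {b : (ℤ × ℤ) × (ℤ × ℤ) // bond ε Ω b.1 b.2},
    ‖v b.1.1 - v b.1.2‖ ^ 2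

/-- The total variation `|μ_v|(Ω)` of the discrete vorticity measure. -/
def XYtv (ε : ℝ) (Ω : Set (ℝ × ℝ)) (v : ℤ × ℤ → ℂ) : ℝ :=
  ∑' i : {i : ℤ × ℤ // cellIn ε Ω i}, |gammaXY v i|

/-- The phase `θ(v) = 2π u(v) ∈ [0, 2π)` of a spin field. -/
def phaseTheta (v : ℤ × ℤ → ℂ) (l : ℤ × ℤ) : ℝ := 2 * Real.pi * phaseu v l

/-- The tangential integral `∫_e ṽ₁ ∂ₛ ṽ₂ ds` of the interpolated field
`ṽ = e^{iθ̃}` along the lattice edge from `a` to `b`, where on the edge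
`θ̃(a + s(b−a)) = θ(v)(a) + 2πs β^e_{u(v)}(a,b)` for `s ∈ [0,1]`. (Parametrizing the edge
by `s ∈ [0,1]`, the arclength factors cancel.) -/
def edgeInt (v : ℤ × ℤ → ℂ) (a b : ℤ × ℤ) : ℝ :=
  ∫ σ in (0 : ℝ)..1,
    Real.cos (phaseTheta v a + 2 * Real.pi * σ * betaE (phaseu v) a b) *
      deriv (fun τ => Real.sin (phaseTheta v a + 2 * Real.pi * τ * betaE (phaseu v) a b)) σ

open Real intervalIntegral

theorem integral_cos_mul_deriv_sin_comp {f f' : ℝ → ℝ} {a b : ℝ}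
    (hf : ∀ x ∈ Set.uIcc a b, HasDerivAt f (f' x) x) (hf' : ContinuousOn f' (Set.uIcc a b)) :
    ∫ x in a..b, cos (f x) * deriv (fun y => sin (f y)) x = ∫ y in f a..f b, cos y ^ 2 := by
  rw [← integral_comp_mul_deriv (g := fun y => cos y ^ 2) hf hf' (continuous_cos.pow 2)]
  refine integral_congr fun x hx => ?_
  simp only [Function.comp_apply, ((hf x hx).sin).deriv]
  ring

theorem phaseTheta_add_betaE (v : ℤ × ℤ → ℂ) (a b : ℤ × ℤ) :
    phaseTheta v a + 2 * π * betaE (phaseu v) a b =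
      phaseTheta v b - Pint (phaseu v b - phaseu v a) * (2 * π) := by
  unfold phaseTheta betaE
  ring

theorem edgeInt_eq_pi_mul_betaE_add (v : ℤ × ℤ → ℂ) (a b : ℤ × ℤ) :
    edgeInt v a b = π * betaE (phaseu v) a b +
      (cos (phaseTheta v b) * sin (phaseTheta v b) -
        cos (phaseTheta v a) * sin (phaseTheta v a)) / 2 := by
  set θ := phaseTheta v
  set β := betaE (phaseu v) a b
  have hθ (σ : ℝ) : HasDerivAt (fun τ => θ a + 2 * π * τ * β) (2 * π * β) σ := by
    simpa using (((hasDerivAt_id σ).const_mul (2 * π)).mul_const β).const_add (θ a)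
  have hend : cos (θ a + 2 * π * β) * sin (θ a + 2 * π * β) = cos (θ b) * sin (θ b) := by
    rw [phaseTheta_add_betaE]
    exact (cos_periodic.mul sin_periodic).sub_int_mul_eq _
  rw [edgeInt, integral_cos_mul_deriv_sin_comp (fun σ _ => hθ σ) continuousOn_const,
    integral_cos_sq]
  simp only [mul_zero, mul_one, zero_mul, add_zero, hend]
  ring

theorem vorticity_eq_boundary_integral_general (v : ℤ × ℤ → ℂ) (i : ℤ × ℤ) :
    gammaXY v i =
      (1 / Real.pi) *
        (edgeInt v i (i + (0, 1)) + edgeInt v (i + (0, 1)) (i + (1, 1)) -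
          edgeInt v (i + (1, 0)) (i + (1, 1)) - edgeInt v i (i + (1, 0))) := by
  simp only [gammaXY, alphaSD, dcurl, edgeInt_eq_pi_mul_betaE_add]
  field_simp
  ring

/-- For a spin field `v : Ω⁰_ε → S¹` and a cell `Q_i` with `i ∈ Ω²_ε`, the discrete
vorticity of `v` in the cell equals `(1/π)` times the line integral of `ṽ₁ dṽ₂` along the
boundary `∂Q_i` (traversed edgewise consistently with the discrete curl), where `ṽ` is the
interpolation of `v` obtained from the affinely interpolated phase on the edges (and
extended `0`-homogeneously inside the cell): `μ_v(Q_i) = (1/π) ∫_{∂Q_i} ṽ₁ ∂ₛ ṽ₂ ds`. -/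
theorem vorticity_eq_boundary_integral
    (Ω : Set (ℝ × ℝ)) (hΩo : IsOpen Ω) (hΩb : Bornology.IsBounded Ω)
    (ε : ℝ) (hε : 0 < ε) (v : ℤ × ℤ → ℂ) (hv : ∀ l, ‖v l‖ = 1)
    (i : ℤ × ℤ) (hi : cellIn ε Ω i) :
    gammaXY v i =
      (1 / Real.pi) *
        (edgeInt v i (i + (0, 1)) + edgeInt v (i + (0, 1)) (i + (1, 1)) -
          edgeInt v (i + (1, 0)) (i + (1, 1)) - edgeInt v i (i + (1, 0))) :=
  vorticity_eq_boundary_integral_general v i
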